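/- arXiv:1509.08813 — 7 statements merged into one kernel-verified Lean document; each statement's English description precedes it below -/
import Mathlib

section
/- Let (X,T) be a weakly mixing dynamical system and x ∈ X. Then the set ω_{N_T}(x) is T-invariant, i.e., T(ω_{N_T}(x)) = ω_{N_T}(x). -/
open Filter Topology Set Metric

section Defs

variable {X : Type*}

/-- A set is "opene" if it is open and nonempty. -/
def Opene [TopologicalSpace X] (U : Set X) : Prop := IsOpen U ∧ U.Nonempty

/-- `N_T(U,V) = {n ∈ ℕ : U ∩ T⁻ⁿV ≠ ∅}`. -/
def NTset (T : X → X) (U V : Set X) : Set ℕ := {n | (U ∩ T^[n] ⁻¹' V).Nonempty}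

/-- `N_T(x,G) = {n ∈ ℕ : Tⁿx ∈ G}`. -/
def NTpt (T : X → X) (x : X) (G : Set X) : Set ℕ := {n | T^[n] x ∈ G}

/-- `ω_{N_T}(x)`. -/
def omegaNT [TopologicalSpace X] (T : X → X) (x : X) : Set X :=
  {z | ∀ G : Set X, IsOpen G → z ∈ G → ∀ U V : Set X, Opene U → Opene V →
    (NTpt T x G ∩ NTset T U V).Nonempty}

/-- The ω-limit set `ω_T(x)`. -/
def omegaT [TopologicalSpace X] (T : X → X) (x : X) : Set X :=
  {z | ∀ G : Set X, IsOpen G → z ∈ G → (NTpt T x G).Infinite}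

/-- Transitive compact system. -/
def TransCompact [TopologicalSpace X] (T : X → X) : Prop :=
  ∀ x : X, (omegaNT T x).Nonempty

/-- Topologically transitive system. -/
def TopTransitive [TopologicalSpace X] (T : X → X) : Prop :=
  ∀ U V : Set X, Opene U → Opene V → (NTset T U V).Nonempty

/-- Weakly mixing: the product system `(X×X, T×T)` is topologically transitive. -/
def WeaklyMixing [TopologicalSpace X] (T : X → X) : Prop :=
  TopTransitive (fun p : X × X => (T p.1, T p.2))

/-- Totally transitive: `(X, T^k)` is transitive for every `k ≥ 1`. -/
def TotallyTransitive [TopologicalSpace X] (T : X → X) : Prop :=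
  ∀ k : ℕ, 1 ≤ k → TopTransitive (T^[k])

/-- Minimal system: every point has dense orbit. -/
def MinimalSystem [TopologicalSpace X] (T : X → X) : Prop :=
  ∀ x : X, Dense (Set.range fun n : ℕ => T^[n] x)

/-- A minimal subset: nonempty, closed, `T M = M`, with no proper nonempty closed invariant subset. -/
def IsMinimalSubset [TopologicalSpace X] (T : X → X) (M : Set X) : Prop :=
  M.Nonempty ∧ IsClosed M ∧ T '' M = M ∧
    ∀ M' : Set X, M' ⊆ M → M'.Nonempty → IsClosed M' → T '' M' = M' → M' = M

/-- A minimal point: one that lies in some minimal subset. -/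
def IsMinimalPoint [TopologicalSpace X] (T : X → X) (x : X) : Prop :=
  ∃ M : Set X, IsMinimalSubset T M ∧ x ∈ M

/-- An M-system: transitive with a dense set of minimal points. -/
def MSystem [TopologicalSpace X] (T : X → X) : Prop :=
  TopTransitive T ∧ Dense {x : X | IsMinimalPoint T x}

/-- Thick subset of ℕ. -/
def ThickSet (S : Set ℕ) : Prop := ∀ N : ℕ, ∃ m : ℕ, ∀ i ≤ N, m + i ∈ S

/-- Syndetic subset of ℕ. -/
def SyndeticSet (S : Set ℕ) : Prop := ∃ N : ℕ, ∀ i : ℕ, ∃ j ≤ N, i + j ∈ S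

/-- Thickly syndetic subset of ℕ. -/
def ThicklySyndeticSet (S : Set ℕ) : Prop :=
  ∀ N : ℕ, SyndeticSet {m : ℕ | ∀ i ≤ N, m + i ∈ S}

/-- `S_T(U,δ)`. -/
def STset [MetricSpace X] (T : X → X) (U : Set X) (δ : ℝ) : Set ℕ :=
  {n | ∃ x ∈ U, ∃ y ∈ U, δ < dist (T^[n] x) (T^[n] y)}

/-- Thickly sensitive system. -/
def ThicklySensitive [MetricSpace X] (T : X → X) : Prop :=
  ∃ δ : ℝ, 0 < δ ∧ ∀ U : Set X, Opene U → ThickSet (STset T U δ)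

/-- Thickly syndetically sensitive system. -/
def ThicklySyndeticallySensitive [MetricSpace X] (T : X → X) : Prop :=
  ∃ δ : ℝ, 0 < δ ∧ ∀ U : Set X, Opene U → ThicklySyndeticSet (STset T U δ)

/-- Multi-sensitive system. -/
def MultiSensitive [MetricSpace X] (T : X → X) : Prop :=
  ∃ δ : ℝ, 0 < δ ∧ ∀ (k : ℕ) (U : Fin (k + 1) → Set X), (∀ i, Opene (U i)) →
    (⋂ i, STset T (U i) δ).Nonempty

/-- Thickly syndetically transitive system. -/
def ThicklySyndeticallyTransitive [TopologicalSpace X] (T : X → X) : Prop :=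
  ∀ U V : Set X, Opene U → Opene V → ThicklySyndeticSet (NTset T U V)

/-- A proximal pair: `liminf d(Tⁿx,Tⁿy) = 0`. -/
def ProximalPair [MetricSpace X] (T : X → X) (x y : X) : Prop :=
  liminf (fun n : ℕ => dist (T^[n] x) (T^[n] y)) atTop = 0

/-- A proximal system: every pair of points is proximal. -/
def ProximalSystem [MetricSpace X] (T : X → X) : Prop :=
  ∀ x y : X, ProximalPair T x y

/-- The proximal cell of `x`. -/
def ProxCell [MetricSpace X] (T : X → X) (x : X) : Set X :=
  {y | ProximalPair T x y}

/-- Li-Yorke sensitivity. -/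
def LiYorkeSensitive [MetricSpace X] (T : X → X) : Prop :=
  ∃ δ : ℝ, 0 < δ ∧ ∀ x : X, ∀ U ∈ 𝓝 x, ∃ y ∈ U,
    liminf (fun n : ℕ => dist (T^[n] x) (T^[n] y)) atTop = 0 ∧
    δ < limsup (fun n : ℕ => dist (T^[n] x) (T^[n] y)) atTop

/-- Spatio-temporally chaotic system. -/
def SpatioTemporallyChaotic [MetricSpace X] (T : X → X) : Prop :=
  ∀ x : X, ∀ U ∈ 𝓝 x, ∃ y ∈ U,
    liminf (fun n : ℕ => dist (T^[n] x) (T^[n] y)) atTop = 0 ∧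
    0 < limsup (fun n : ℕ => dist (T^[n] x) (T^[n] y)) atTop

/-- A distal point: not proximal to any other point of its orbit closure. -/
def IsDistalPoint [MetricSpace X] (T : X → X) (x : X) : Prop :=
  ∀ y ∈ closure (Set.range fun n : ℕ => T^[n] x), y ≠ x →
    0 < liminf (fun n : ℕ => dist (T^[n] x) (T^[n] y)) atTop

/-- The Lyapunov number `𝕃_r`. -/
noncomputable def LyapR [MetricSpace X] (T : X → X) : ℝ :=
  sSup {δ : ℝ | 0 < δ ∧ ∀ x : X, ∀ U : Set X, IsOpen U → x ∈ U →
    ∃ y ∈ U, ∃ n : ℕ, δ < dist (T^[n] x) (T^[n] y)}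

/-- The Lyapunov number `𝕃̄_r`. -/
noncomputable def LyapRbar [MetricSpace X] (T : X → X) : ℝ :=
  sSup {δ : ℝ | 0 < δ ∧ ∀ x : X, ∀ U : Set X, IsOpen U → x ∈ U →
    ∃ y ∈ U, δ < limsup (fun n : ℕ => dist (T^[n] x) (T^[n] y)) atTop}

/-- `min_{1≤i≤k} d(Tⁿ xᵢ, Tⁿ yᵢ)`. -/
noncomputable def minDist [MetricSpace X] (T : X → X) {k : ℕ}
    (x y : Fin (k + 1) → X) (n : ℕ) : ℝ :=
  Finset.univ.inf' Finset.univ_nonempty (fun i => dist (T^[n] (x i)) (T^[n] (y i)))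

/-- The Lyapunov number `𝕃_{m,r}`. -/
noncomputable def LyapMR [MetricSpace X] (T : X → X) : ℝ :=
  sSup {δ : ℝ | 0 < δ ∧ ∀ (k : ℕ) (x : Fin (k + 1) → X) (U : Fin (k + 1) → Set X),
    (∀ i, IsOpen (U i) ∧ x i ∈ U i) →
    ∃ y : Fin (k + 1) → X, (∀ i, y i ∈ U i) ∧ ∃ n : ℕ, δ < minDist T x y n}

/-- The Lyapunov number `𝕃̄_{m,r}`. -/
noncomputable def LyapMRbar [MetricSpace X] (T : X → X) : ℝ :=
  sSup {δ : ℝ | 0 < δ ∧ ∀ (k : ℕ) (x : Fin (k + 1) → X) (U : Fin (k + 1) → Set X),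
    (∀ i, IsOpen (U i) ∧ x i ∈ U i) →
    ∃ y : Fin (k + 1) → X, (∀ i, y i ∈ U i) ∧
      δ < limsup (fun n : ℕ => minDist T x y n) atTop}

/-- The Lyapunov number `𝕃_{m,d}`. -/
noncomputable def LyapMD [MetricSpace X] (T : X → X) : ℝ :=
  sSup {δ : ℝ | 0 < δ ∧ ∀ (k : ℕ) (U : Fin (k + 1) → Set X), (∀ i, Opene (U i)) →
    ∃ x y : Fin (k + 1) → X, (∀ i, x i ∈ U i ∧ y i ∈ U i) ∧ ∃ n : ℕ, δ < minDist T x y n}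

/-- The Lyapunov number `𝕃̄_{m,d}`. -/
noncomputable def LyapMDbar [MetricSpace X] (T : X → X) : ℝ :=
  sSup {δ : ℝ | 0 < δ ∧ ∀ (k : ℕ) (U : Fin (k + 1) → Set X), (∀ i, Opene (U i)) →
    ∃ x y : Fin (k + 1) → X, (∀ i, x i ∈ U i ∧ y i ∈ U i) ∧
      δ < limsup (fun n : ℕ => minDist T x y n) atTop}

/-- `(k,T,ε)`-separated set with respect to the sequence `ns` (with `ns 0 = 0` by convention). -/
def IsSepSet [MetricSpace X] (T : X → X) (ns : ℕ → ℕ) (k : ℕ) (ε : ℝ) (E : Set X) : Prop :=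
  ∀ x ∈ E, ∀ y ∈ E, x ≠ y → ∃ j < k, ε < dist (T^[ns j] x) (T^[ns j] y)

/-- `sep(k,T,ε)`: maximal cardinality of a `(k,T,ε)`-separated set. -/
noncomputable def sepNum [MetricSpace X] (T : X → X) (ns : ℕ → ℕ) (k : ℕ) (ε : ℝ) : ℕ :=
  sSup {r : ℕ | ∃ E : Finset X, IsSepSet T ns k ε ↑E ∧ E.card = r}

/-- Topological sequence entropy along `ns`:
`h_N(T) = lim_{ε→0} limsup_{k→∞} (1/k) log sep(k,T,ε)` (the limit as `ε → 0⁺` of the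
nonincreasing-in-`ε` quantity, i.e. the supremum over `ε > 0`). -/
noncomputable def seqEntropy [MetricSpace X] (T : X → X) (ns : ℕ → ℕ) : EReal :=
  ⨆ (ε : ℝ) (_ : 0 < ε),
    limsup (fun k : ℕ => ((Real.log (sepNum T ns k ε) / k : ℝ) : EReal)) atTop

end Defs


/-! A point `w ∉ ω_{N_T}(x)` is witnessed by a neighbourhood `G` and opene `U, V` with
`N_T(x, G) ∩ N_T(U, V) = ∅`. Weak mixing (Furstenberg's intersection lemma) lets finitely many
such witnesses be merged into one, so by compactness the whole fibre `T⁻¹{z}` has a common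
witness if it misses `ω_{N_T}(x)`. Shifting time by one step then turns it into a witness for `z`:
if `Tᵐ⁺¹x ∉ T(Gᶜ)` then `Tᵐx ∈ G`, and a disjoint pair of opene sets rules out time `0`.
The inclusion `T(ω_{N_T}(x)) ⊆ ω_{N_T}(x)` is the same shift, run with `T⁻¹G` and `T⁻¹V`. -/

section OmegaNT

variable {X : Type*} {T : X → X}

theorem succ_mem_NTset_iff {U V : Set X} {n : ℕ} :
    n + 1 ∈ NTset T U V ↔ n ∈ NTset T U (T ⁻¹' V) := by
  simp only [NTset, mem_ofPred_eq, Function.iterate_succ', preimage_comp]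

theorem mem_NTset_of_succ_mem_NTset_preimage {U V : Set X} {n : ℕ}
    (h : n + 1 ∈ NTset T (T ⁻¹' U) V) : n ∈ NTset T U V := by
  obtain ⟨p, hpU, hpV⟩ := h
  exact ⟨T p, hpU, by rwa [mem_preimage, ← Function.iterate_succ_apply]⟩

theorem succ_mem_NTpt_iff {x : X} {G : Set X} {n : ℕ} :
    n + 1 ∈ NTpt T x G ↔ n ∈ NTpt T x (T ⁻¹' G) := by
  simp only [NTpt, mem_ofPred_eq, mem_preimage, Function.iterate_succ_apply']

theorem zero_notMem_NTset {U V : Set X} (h : Disjoint U V) : 0 ∉ NTset T U V := by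
  rintro ⟨p, hpU, hpV⟩
  exact h.notMem_of_mem_left hpU hpV

variable [TopologicalSpace X]

theorem exists_opene_disjoint [T2Space X] [Nontrivial X] :
    ∃ U V : Set X, Opene U ∧ Opene V ∧ Disjoint U V := by
  obtain ⟨a, b, hab⟩ := exists_pair_ne X
  obtain ⟨U, V, hU, hV, haU, hbV, hUV⟩ := t2_separation hab
  exact ⟨U, V, ⟨hU, a, haU⟩, ⟨hV, b, hbV⟩, hUV⟩

theorem WeaklyMixing.exists_NTset_subset_inter (hTc : Continuous T) (hwm : WeaklyMixing T)
    {U₁ V₁ U₂ V₂ : Set X} (hU₁ : Opene U₁) (hV₁ : Opene V₁) (hU₂ : Opene U₂) (hV₂ : Opene V₂) :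
    ∃ U V : Set X, Opene U ∧ Opene V ∧ NTset T U V ⊆ NTset T U₁ V₁ ∩ NTset T U₂ V₂ := by
  obtain ⟨n, p, ⟨hpU₁, hpV₁⟩, hpn⟩ := hwm (U₁ ×ˢ V₁) (U₂ ×ˢ V₂)
    ⟨hU₁.1.prod hV₁.1, hU₁.2.prod hV₁.2⟩ ⟨hU₂.1.prod hV₂.1, hU₂.2.prod hV₂.2⟩
  obtain ⟨hpU₂, hpV₂⟩ : T^[n] p.1 ∈ U₂ ∧ T^[n] p.2 ∈ V₂ := by
    simpa only [mem_preimage, ← Prod.map_def, Prod.map_iterate, mem_prod, Prod.map_fst,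
      Prod.map_snd] using hpn
  refine ⟨U₁ ∩ T^[n] ⁻¹' U₂, V₁ ∩ T^[n] ⁻¹' V₂,
    ⟨hU₁.1.inter (hU₂.1.preimage (hTc.iterate n)), p.1, hpU₁, hpU₂⟩,
    ⟨hV₁.1.inter (hV₂.1.preimage (hTc.iterate n)), p.2, hpV₁, hpV₂⟩, ?_⟩
  rintro m ⟨q, ⟨hqU₁, hqU₂⟩, hqV₁, hqV₂⟩
  refine ⟨⟨q, hqU₁, hqV₁⟩, T^[n] q, hqU₂, ?_⟩
  rwa [mem_preimage, ← Function.iterate_add_apply, add_comm, Function.iterate_add_apply]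

def FarFromOmegaNT (T : X → X) (x : X) (K : Set X) : Prop :=
  ∃ G : Set X, IsOpen G ∧ K ⊆ G ∧
    ∃ U V : Set X, Opene U ∧ Opene V ∧ Disjoint (NTpt T x G) (NTset T U V)

theorem notMem_omegaNT_iff {x z : X} : z ∉ omegaNT T x ↔ FarFromOmegaNT T x {z} := by
  simp only [omegaNT, FarFromOmegaNT, mem_ofPred_eq, singleton_subset_iff,
    disjoint_iff_inter_eq_empty, ← not_nonempty_iff_eq_empty]
  push Not
  rfl

namespace FarFromOmegaNT

variable {x : X} {K L : Set X}

theorem mono (h : FarFromOmegaNT T x K) (hLK : L ⊆ K) : FarFromOmegaNT T x L :=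
  let ⟨G, hG, hKG, rest⟩ := h
  ⟨G, hG, hLK.trans hKG, rest⟩

theorem union (hTc : Continuous T) (hwm : WeaklyMixing T) (hK : FarFromOmegaNT T x K)
    (hL : FarFromOmegaNT T x L) : FarFromOmegaNT T x (K ∪ L) := by
  obtain ⟨G₁, hG₁, hKG₁, U₁, V₁, hU₁, hV₁, hdisj₁⟩ := hK
  obtain ⟨G₂, hG₂, hLG₂, U₂, V₂, hU₂, hV₂, hdisj₂⟩ := hL
  obtain ⟨U, V, hU, hV, hsub⟩ := hwm.exists_NTset_subset_inter hTc hU₁ hV₁ hU₂ hV₂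
  refine ⟨G₁ ∪ G₂, hG₁.union hG₂, union_subset_union hKG₁ hLG₂, U, V, hU, hV, ?_⟩
  have hpt : NTpt T x (G₁ ∪ G₂) = NTpt T x G₁ ∪ NTpt T x G₂ := rfl
  rw [hpt, disjoint_union_left]
  exact ⟨hdisj₁.mono_right (hsub.trans inter_subset_left),
    hdisj₂.mono_right (hsub.trans inter_subset_right)⟩

theorem preimage (hTc : Continuous T) (hTs : Function.Surjective T)
    (h : FarFromOmegaNT T x K) : FarFromOmegaNT T x (T ⁻¹' K) := by
  obtain ⟨G, hG, hKG, U, V, hU, hV, hdisj⟩ := h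
  refine ⟨T ⁻¹' G, hG.preimage hTc, preimage_mono hKG, U, T ⁻¹' V, hU,
    ⟨hV.1.preimage hTc, hV.2.preimage hTs⟩, disjoint_left.2 fun n hnG hnUV => ?_⟩
  exact disjoint_left.1 hdisj (succ_mem_NTpt_iff.2 hnG) (succ_mem_NTset_iff.2 hnUV)

theorem of_preimage [CompactSpace X] [T2Space X] [Nontrivial X] (hTc : Continuous T)
    (hTs : Function.Surjective T) (hwm : WeaklyMixing T) (h : FarFromOmegaNT T x (T ⁻¹' K)) :
    FarFromOmegaNT T x K := by
  obtain ⟨G, hG, hKG, U, V, hU, hV, hdisj⟩ := h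
  obtain ⟨U₀, V₀, hU₀, hV₀, hUV₀⟩ := exists_opene_disjoint (X := X)
  obtain ⟨U', V', hU', hV', hsub⟩ :=
    hwm.exists_NTset_subset_inter hTc ⟨hU.1.preimage hTc, hU.2.preimage hTs⟩ hV hU₀ hV₀
  refine ⟨(T '' Gᶜ)ᶜ, (hG.isClosed_compl.isCompact.image hTc).isClosed.isOpen_compl,
    fun k hk ⟨p, hpG, hpk⟩ => hpG (hKG (by rwa [mem_preimage, hpk])), U', V', hU', hV',
    disjoint_left.2 fun n hnG hnUV => ?_⟩
  cases n with
  | zero => exact zero_notMem_NTset hUV₀ (hsub hnUV).2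
  | succ m =>
    have hmG : m ∈ NTpt T x G := by
      by_contra hmG
      exact hnG ⟨T^[m] x, hmG, (Function.iterate_succ_apply' T m x).symm⟩
    exact disjoint_left.1 hdisj hmG (mem_NTset_of_succ_mem_NTset_preimage (hsub hnUV).1)

end FarFromOmegaNT

theorem IsCompact.farFromOmegaNT (hTc : Continuous T) (hwm : WeaklyMixing T) {x : X}
    {K : Set X} (hK : IsCompact K) (h : ∀ w ∈ K, w ∉ omegaNT T x) : FarFromOmegaNT T x K :=
  hK.induction_on
    ⟨∅, isOpen_empty, subset_rfl, univ, univ, ⟨isOpen_univ, x, trivial⟩,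
      ⟨isOpen_univ, x, trivial⟩, by simp [NTpt]⟩
    (fun _ _ hst ht => ht.mono hst) (fun _ _ hs ht => hs.union hTc hwm ht)
    fun w hw =>
      let ⟨G, hG, hwG, hUV⟩ := notMem_omegaNT_iff.1 (h w hw)
      ⟨G, mem_nhdsWithin_of_mem_nhds (hG.mem_nhds (hwG rfl)), G, hG, subset_rfl, hUV⟩

theorem image_omegaNT_subset (hTc : Continuous T) (hTs : Function.Surjective T) (x : X) :
    T '' omegaNT T x ⊆ omegaNT T x := by
  rintro _ ⟨z, hz, rfl⟩
  by_contra hTz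
  exact notMem_omegaNT_iff.2
    (((notMem_omegaNT_iff.1 hTz).preimage hTc hTs).mono (singleton_subset_iff.2 rfl)) hz

theorem omegaNT_subset_image [CompactSpace X] [T2Space X] [Nontrivial X] (hTc : Continuous T)
    (hTs : Function.Surjective T) (hwm : WeaklyMixing T) (x : X) :
    omegaNT T x ⊆ T '' omegaNT T x := by
  intro z hz
  by_contra hz'
  have hfibre : ∀ w ∈ T ⁻¹' {z}, w ∉ omegaNT T x := fun w hw hwω => hz' ⟨w, hwω, hw⟩
  have hfar : FarFromOmegaNT T x (T ⁻¹' {z}) :=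
    (isClosed_singleton.preimage hTc).isCompact.farFromOmegaNT hTc hwm hfibre
  exact notMem_omegaNT_iff.2 (hfar.of_preimage hTc hTs hwm) hz

end OmegaNT

theorem stmt8_general {X : Type*} [MetricSpace X] [CompactSpace X] [Nontrivial X]
    {T : X → X} (hTc : Continuous T) (hTs : Function.Surjective T)
    (hwm : WeaklyMixing T) (x : X) :
    T '' omegaNT T x = omegaNT T x :=
  (image_omegaNT_subset hTc hTs x).antisymm (omegaNT_subset_image hTc hTs hwm x)

/-- For a weakly mixing system, `ω_{N_T}(x)` is `T`-invariant:
`T(ω_{N_T}(x)) = ω_{N_T}(x)`. -/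
theorem stmt8 {X : Type*} [MetricSpace X] [CompactSpace X] [Nontrivial X]
    (hperf : ∀ x : X, (𝓝[≠] x).NeBot)
    {T : X → X} (hTc : Continuous T) (hTs : Function.Surjective T)
    (hwm : WeaklyMixing T) (x : X) :
    T '' omegaNT T x = omegaNT T x :=
  stmt8_general hTc hTs hwm x
end

section
/- Let (X,T) be a transitive compact dynamical system. Then for every x ∈ X the proximal cell Prox_T(x) is a dense Gδ subset of X. -/
open Filter Topology Set Metric

/-!
The proximal cell of `x` is the countable intersection over `ε = 1/(k+1)` of the sets
`{y | ∃ n, d(Tⁿx, Tⁿy) < ε}`: in a compact space a single close approach for every `ε`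
already forces `liminf = 0`, because once two orbits meet they agree forever, and otherwise
the finitely many early distances are bounded away from `0`. These sets are open by continuity
of `T`, and dense because for `z ∈ ω_{N_T}(x)` some `n` sends both `x` and a point of any given
ball into `B(z, ε/2)`. Baire's theorem concludes.
-/

lemma Filter.liminf_eq_zero_iff_frequently_lt {α : Type*} {f : Filter α} [f.NeBot]
    {u : α → ℝ} (h0 : ∀ a, 0 ≤ u a) (hbdd : f.IsBoundedUnder (· ≤ ·) u) :
    liminf u f = 0 ↔ ∀ ε > 0, ∃ᶠ a in f, u a < ε := by
  have hbdd' : f.IsBoundedUnder (· ≥ ·) u := isBoundedUnder_of ⟨0, h0⟩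
  have hnonneg : 0 ≤ liminf u f :=
    le_liminf_of_le hbdd.isCoboundedUnder_ge (Eventually.of_forall h0)
  rw [← liminf_le_iff hbdd.isCoboundedUnder_ge hbdd', le_antisymm_iff]
  exact and_iff_left hnonneg

section Orbits

variable {X : Type*} {T : X → X}

lemma isOpen_setOf_exists_dist_iterate_lt [PseudoMetricSpace X] (hT : Continuous T) (x : X)
    (ε : ℝ) : IsOpen {y | ∃ n, dist (T^[n] x) (T^[n] y) < ε} := by
  simp only [ofPred_exists]
  exact isOpen_iUnion fun n => isOpen_lt (continuous_const.dist (hT.iterate n)) continuous_const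

lemma dense_setOf_exists_dist_iterate_lt [PseudoMetricSpace X] {x : X}
    (hx : (omegaNT T x).Nonempty) {ε : ℝ} (hε : 0 < ε) :
    Dense {y | ∃ n, dist (T^[n] x) (T^[n] y) < ε} := by
  obtain ⟨z, hz⟩ := hx
  have hε2 : 0 < ε / 2 := half_pos hε
  rw [Metric.dense_iff]
  intro v r hr
  obtain ⟨n, hxn, y, hyv, hyn⟩ := hz (ball z (ε / 2)) isOpen_ball (mem_ball_self hε2)
    (ball v r) (ball z (ε / 2)) ⟨isOpen_ball, v, mem_ball_self hr⟩
    ⟨isOpen_ball, z, mem_ball_self hε2⟩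
  refine ⟨y, hyv, n, ?_⟩
  calc dist (T^[n] x) (T^[n] y) ≤ dist (T^[n] x) z + dist (T^[n] y) z := dist_triangle_right _ _ _
    _ < ε / 2 + ε / 2 := add_lt_add hxn hyn
    _ = ε := add_halves ε

lemma frequently_dist_iterate_lt [MetricSpace X] {x y : X}
    (h : ∀ δ > 0, ∃ n, dist (T^[n] x) (T^[n] y) < δ) {ε : ℝ} (hε : 0 < ε) :
    ∃ᶠ n in atTop, dist (T^[n] x) (T^[n] y) < ε := by
  rw [frequently_atTop]
  intro N
  by_cases hmeet : ∃ m, T^[m] x = T^[m] y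
  · obtain ⟨m, hm⟩ := hmeet
    refine ⟨N + m, Nat.le_add_right N m, ?_⟩
    simpa only [Function.iterate_add_apply, hm, dist_self] using hε
  · push Not at hmeet
    have hsmall : ∀ᶠ δ in 𝓝 (0 : ℝ),
        δ < ε ∧ ∀ i ∈ Finset.range N, δ < dist (T^[i] x) (T^[i] y) :=
      (eventually_lt_nhds hε).and <| (eventually_all_finset _).2 fun i _ =>
        eventually_lt_nhds (dist_pos.2 (hmeet i))
    obtain ⟨δ, ⟨hδε, hδN⟩, hδ⟩ := ((hsmall.filter_mono nhdsWithin_le_nhds).and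
      (self_mem_nhdsWithin (s := Ioi 0))).exists
    obtain ⟨n, hn⟩ := h δ hδ
    refine ⟨n, ?_, hn.trans hδε⟩
    by_contra! hnN
    exact (hn.trans (hδN n (Finset.mem_range.2 hnN))).false

lemma proximalPair_iff_forall_exists_dist_lt [MetricSpace X] [CompactSpace X] {x y : X} :
    ProximalPair T x y ↔ ∀ ε > 0, ∃ n, dist (T^[n] x) (T^[n] y) < ε := by
  have hbdd : atTop.IsBoundedUnder (· ≤ ·) fun n => dist (T^[n] x) (T^[n] y) :=
    isBoundedUnder_of ⟨diam (univ : Set X), fun n =>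
      dist_le_diam_of_mem isCompact_univ.isBounded (mem_univ _) (mem_univ _)⟩
  rw [ProximalPair, liminf_eq_zero_iff_frequently_lt (fun n => dist_nonneg) hbdd]
  exact ⟨fun h ε hε => (h ε hε).exists, fun h ε hε => frequently_dist_iterate_lt h hε⟩

lemma proxCell_eq_iInter [MetricSpace X] [CompactSpace X] (x : X) :
    ProxCell T x = ⋂ k : ℕ, {y | ∃ n, dist (T^[n] x) (T^[n] y) < 1 / (k + 1)} := by
  ext y
  simp only [ProxCell, mem_ofPred_eq, mem_iInter, proximalPair_iff_forall_exists_dist_lt]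
  refine ⟨fun h k => h _ Nat.one_div_pos_of_nat, fun h ε hε => ?_⟩
  obtain ⟨k, hk⟩ := exists_nat_one_div_lt hε
  obtain ⟨n, hn⟩ := h k
  exact ⟨n, hn.trans hk⟩

end Orbits

theorem stmt9_general {X : Type*} [MetricSpace X] [CompactSpace X]
    {T : X → X} (hTc : Continuous T)
    (htc : TransCompact T) (x : X) :
    Dense (ProxCell T x) ∧ IsGδ (ProxCell T x) := by
  have hopen (k : ℕ) : IsOpen {y | ∃ n, dist (T^[n] x) (T^[n] y) < 1 / (k + 1)} :=
    isOpen_setOf_exists_dist_iterate_lt hTc x _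
  have hdense (k : ℕ) : Dense {y | ∃ n, dist (T^[n] x) (T^[n] y) < 1 / (k + 1)} :=
    dense_setOf_exists_dist_iterate_lt (htc x) Nat.one_div_pos_of_nat
  rw [proxCell_eq_iInter]
  exact ⟨dense_iInter_of_isOpen hopen hdense, IsGδ.iInter_of_isOpen hopen⟩

/-- In a transitive compact system, every proximal cell is a dense Gδ set. -/
theorem stmt9 {X : Type*} [MetricSpace X] [CompactSpace X] [Nontrivial X]
    (hperf : ∀ x : X, (𝓝[≠] x).NeBot)
    {T : X → X} (hTc : Continuous T) (hTs : Function.Surjective T)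
    (htc : TransCompact T) (x : X) :
    Dense (ProxCell T x) ∧ IsGδ (ProxCell T x) :=
  stmt9_general hTc htc x
end

section
/- If (X,T) is a thickly sensitive M-system, then (X,T) is thickly syndetically sensitive. -/
open Filter Topology Set Metric

/-!
Fix the sensitivity constant `δ` and a block `m, …, m + N` of times in `S_T(U, δ)`. Each of these
times is witnessed by a pair of opene subsets of `U` that are `δ`-apart at that time, and by
transitivity a single opene set `E` visits all `2(N + 1)` of them. A minimal point `y ∈ E` then
supplies all the witnesses along its own orbit, in a bounded initial segment of it. Since `y` is
minimal, it returns syndetically to any neighbourhood, in particular to one whose points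
`δ / 4`-shadow this segment; every return time `k` shifts the whole block: `k + m, …, k + m + N`
lie in `S_T(U, δ / 2)`.
-/

section Dynamics

variable {X : Type*}

lemma SyndeticSet.of_forall_add_mem {S S' : Set ℕ} (hS : SyndeticSet S) (m : ℕ)
    (h : ∀ k ∈ S, k + m ∈ S') : SyndeticSet S' := by
  obtain ⟨N, hN⟩ := hS
  refine ⟨N + m, fun i => ?_⟩
  obtain ⟨j, hjN, hj⟩ := hN i
  exact ⟨j + m, by omega, by simpa [add_assoc] using h _ hj⟩

lemma SyndeticSet.mono {S S' : Set ℕ} (hS : SyndeticSet S) (h : S ⊆ S') : SyndeticSet S' :=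
  hS.of_forall_add_mem 0 fun _ hk => h hk

-- `B = ⋂ n, T^[n] '' A`; compactness is what makes `T '' B` all of `B`.
lemma IsCompact.exists_subset_image_eq [TopologicalSpace X] [T2Space X] {T : X → X}
    (hTc : Continuous T) {A : Set X} (hAc : IsCompact A) (hA : A.Nonempty)
    (hAT : MapsTo T A A) :
    ∃ B ⊆ A, B.Nonempty ∧ IsClosed B ∧ T '' B = B := by
  set K : ℕ → Set X := fun n => T^[n] '' A
  have hKc (n : ℕ) : IsCompact (K n) := hAc.image (hTc.iterate n)
  have hK_succ (n : ℕ) : K (n + 1) = T '' K n := by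
    simp only [K, Function.iterate_succ', image_comp]
  have hK_anti (n : ℕ) : K (n + 1) ⊆ K n := by
    simp only [K, Function.iterate_succ, image_comp]
    exact image_mono hAT.image_subset
  refine ⟨⋂ n, K n, iInter_subset_of_subset 0 (by simp [K]),
    IsCompact.nonempty_iInter_of_sequence_nonempty_isCompact_isClosed K hK_anti
      (fun n => hA.image _) (hKc 0) (fun n => (hKc n).isClosed),
    isClosed_iInter fun n => (hKc n).isClosed, subset_antisymm ?_ ?_⟩
  · refine (image_iInter_subset K T).trans fun z hz => mem_iInter.2 fun n => hK_anti n ?_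
    rw [hK_succ]
    exact mem_iInter.1 hz n
  · intro z hz
    set C : ℕ → Set X := fun n => K n ∩ T ⁻¹' {z}
    have hCc (n : ℕ) : IsClosed (C n) :=
      (hKc n).isClosed.inter (isClosed_singleton.preimage hTc)
    have hCne (n : ℕ) : (C n).Nonempty := by
      obtain ⟨w, hw, hwz⟩ := hK_succ n ▸ mem_iInter.1 hz (n + 1)
      exact ⟨w, hw, hwz⟩
    obtain ⟨w, hw⟩ := IsCompact.nonempty_iInter_of_sequence_nonempty_isCompact_isClosed C
      (fun n => inter_subset_inter_left _ (hK_anti n)) hCne ((hKc 0).inter_right (isClosed_singleton.preimage hTc)) hCc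
    exact ⟨w, mem_iInter.2 fun n => (mem_iInter.1 hw n).1, (mem_iInter.1 hw 0).2⟩

lemma IsMinimalSubset.eq_of_mapsTo [TopologicalSpace X] [CompactSpace X] [T2Space X]
    {T : X → X} (hTc : Continuous T) {M A : Set X} (hM : IsMinimalSubset T M) (hAM : A ⊆ M)
    (hA : A.Nonempty) (hAc : IsClosed A) (hAT : MapsTo T A A) : A = M := by
  obtain ⟨B, hBA, hB, hBc, hBT⟩ := hAc.isCompact.exists_subset_image_eq hTc hA hAT
  exact subset_antisymm hAM (hM.2.2.2 B (hBA.trans hAM) hB hBc hBT ▸ hBA)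

lemma IsMinimalPoint.syndeticSet_NTpt [TopologicalSpace X] [CompactSpace X] [T2Space X]
    {T : X → X} (hTc : Continuous T) {y : X} (hy : IsMinimalPoint T y) {G : Set X}
    (hG : IsOpen G) (hyG : y ∈ G) : SyndeticSet (NTpt T y G) := by
  obtain ⟨M, hM, hyM⟩ := hy
  have hMT : MapsTo T M M := fun x hx => hM.2.2.1 ▸ mem_image_of_mem T hx
  have hvisit : M ⊆ ⋃ n, T^[n] ⁻¹' G := by
    intro z hzM
    by_contra hz
    set A := M ∩ ⋂ n, T^[n] ⁻¹' Gᶜ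
    have hzA : z ∈ A := ⟨hzM, by simpa using hz⟩
    have hAc : IsClosed A :=
      hM.2.1.inter (isClosed_iInter fun n => hG.isClosed_compl.preimage (hTc.iterate n))
    have hAT : MapsTo T A A := fun x hx => ⟨hMT hx.1, mem_iInter.2 fun n => by
      simpa only [mem_preimage, Function.iterate_succ_apply] using mem_iInter.1 hx.2 (n + 1)⟩
    have hAM : A = M := hM.eq_of_mapsTo hTc inter_subset_left ⟨z, hzA⟩ hAc hAT
    rw [← hAM] at hyM
    exact mem_iInter.1 hyM.2 0 hyG
  obtain ⟨s, hs⟩ := hM.2.1.isCompact.elim_finite_subcover _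
    (fun n => hG.preimage (hTc.iterate n)) hvisit
  refine ⟨s.sup id, fun i => ?_⟩
  obtain ⟨n, hn, hnG⟩ := mem_iUnion₂.1 (hs (hMT.iterate i hyM))
  refine ⟨n, Finset.le_sup (f := id) hn, ?_⟩
  show T^[i + n] y ∈ G
  rwa [add_comm, Function.iterate_add_apply]

lemma IsMinimalPoint.syndeticSet_forall_dist_iterate_lt [MetricSpace X] [CompactSpace X]
    {T : X → X} (hTc : Continuous T) {y : X} (hy : IsMinimalPoint T y) (D : ℕ) {ε : ℝ}
    (hε : 0 < ε) : SyndeticSet {k | ∀ i ≤ D, dist (T^[i] (T^[k] y)) (T^[i] y) < ε} := by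
  set G := ⋂ i ∈ Finset.range (D + 1), T^[i] ⁻¹' ball (T^[i] y) ε
  have hG : IsOpen G := isOpen_biInter_finset fun i _ => isOpen_ball.preimage (hTc.iterate i)
  refine (hy.syndeticSet_NTpt hTc hG (mem_iInter₂.2 fun i _ => mem_ball_self hε)).mono
    fun k hk i hi => ?_
  exact mem_iInter₂.1 hk i (Finset.mem_range.2 (by omega))

lemma exists_opene_pair_of_mem_STset [MetricSpace X] {T : X → X} (hTc : Continuous T)
    {U : Set X} (hU : IsOpen U) {δ : ℝ} {n : ℕ} (hn : n ∈ STset T U δ) :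
    ∃ P Q : Set X, Opene P ∧ Opene Q ∧ P ⊆ U ∧ Q ⊆ U ∧
      ∀ p ∈ P, ∀ q ∈ Q, δ < dist (T^[n] p) (T^[n] q) := by
  obtain ⟨u, hu, v, hv, huv⟩ := hn
  set ε := (dist (T^[n] u) (T^[n] v) - δ) / 2
  have hε : 0 < ε := by simp only [ε]; linarith
  have hball (w : X) : IsOpen (U ∩ T^[n] ⁻¹' ball (T^[n] w) ε) :=
    hU.inter (isOpen_ball.preimage (hTc.iterate n))
  refine ⟨U ∩ T^[n] ⁻¹' ball (T^[n] u) ε, U ∩ T^[n] ⁻¹' ball (T^[n] v) ε,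
    ⟨hball u, u, hu, mem_ball_self hε⟩, ⟨hball v, v, hv, mem_ball_self hε⟩,
    inter_subset_left, inter_subset_left, ?_⟩
  rintro p ⟨-, hp⟩ q ⟨-, hq⟩
  rw [mem_preimage, mem_ball, dist_comm] at hp
  rw [mem_preimage, mem_ball] at hq
  have := dist_triangle4 (T^[n] u) (T^[n] p) (T^[n] q) (T^[n] v)
  simp only [ε] at hp hq
  linarith

lemma TopTransitive.exists_opene_subset_mapsTo_iterate [TopologicalSpace X] {T : X → X}
    (hT : TopTransitive T) (hTc : Continuous T) {ι : Type*} (s : Finset ι) {W : ι → Set X}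
    (hW : ∀ i ∈ s, Opene (W i)) {V : Set X} (hV : Opene V) :
    ∃ E ⊆ V, Opene E ∧ ∃ t : ι → ℕ, ∀ i ∈ s, MapsTo T^[t i] E (W i) := by
  classical
  induction s using Finset.induction_on with
  | empty => exact ⟨V, subset_rfl, hV, 0, by simp⟩
  | insert i s hi ih =>
    obtain ⟨E, hEV, hE, t, ht⟩ := ih fun j hj => hW j (Finset.mem_insert_of_mem hj)
    have hWi := hW i (Finset.mem_insert_self i s)
    obtain ⟨n, hn⟩ := hT E (W i) hE hWi
    refine ⟨E ∩ T^[n] ⁻¹' W i, inter_subset_left.trans hEV,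
      ⟨hE.1.inter (hWi.1.preimage (hTc.iterate n)), hn⟩, Function.update t i n, ?_⟩
    intro j hj
    rcases Finset.mem_insert.1 hj with rfl | hj
    · rw [Function.update_self]
      exact fun x hx => hx.2
    · rw [Function.update_of_ne (ne_of_mem_of_not_mem hj hi)]
      exact (ht j hj).mono_left inter_subset_left

lemma MSystem.exists_isMinimalPoint_forall_mem_STset [MetricSpace X] {T : X → X}
    (hM : MSystem T) (hTc : Continuous T) {U : Set X} (hU : Opene U) {δ : ℝ} {J : Finset ℕ}
    (hJ : ∀ n ∈ J, n ∈ STset T U δ) :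
    ∃ y, IsMinimalPoint T y ∧ ∃ a b : ℕ → ℕ, ∀ n ∈ J,
      T^[a n] y ∈ U ∧ T^[b n] y ∈ U ∧ δ < dist (T^[n + a n] y) (T^[n + b n] y) := by
  choose! P Q hP hQ hPU hQU hPQ using
    fun n hn => exists_opene_pair_of_mem_STset hTc hU.1 (hJ n hn)
  obtain ⟨E, -, hE, t, ht⟩ := hM.1.exists_opene_subset_mapsTo_iterate hTc (J.disjSum J)
    (W := Sum.elim P Q) (by simpa [Finset.mem_disjSum] using ⟨hP, hQ⟩) hU
  obtain ⟨y, hyE, hy⟩ := hM.2.inter_open_nonempty E hE.1 hE.2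
  refine ⟨y, hy, fun n => t (.inl n), fun n => t (.inr n), fun n hn => ?_⟩
  have hp := ht (.inl n) (Finset.inl_mem_disjSum.2 hn) hyE
  have hq := ht (.inr n) (Finset.inr_mem_disjSum.2 hn) hyE
  refine ⟨hPU n hn hp, hQU n hn hq, ?_⟩
  simpa only [Function.iterate_add_apply] using hPQ n hn _ hp _ hq

lemma IsMinimalPoint.syndeticSet_forall_add_mem_STset [MetricSpace X] [CompactSpace X]
    {T : X → X} (hTc : Continuous T) {y : X} (hy : IsMinimalPoint T y) {U : Set X} {δ : ℝ}
    (hδ : 0 < δ) {J : Finset ℕ} {a b : ℕ → ℕ}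
    (hab : ∀ n ∈ J, T^[a n] y ∈ U ∧ T^[b n] y ∈ U ∧ δ < dist (T^[n + a n] y) (T^[n + b n] y)) :
    SyndeticSet {k | ∀ n ∈ J, k + n ∈ STset T U (δ / 2)} := by
  set D := J.sup fun n => n + max (a n) (b n)
  refine (hy.syndeticSet_forall_dist_iterate_lt hTc D (ε := δ / 4) (by positivity)).mono
    fun k hk n hn => ?_
  obtain ⟨haU, hbU, hfar⟩ := hab n hn
  have hnD : n + max (a n) (b n) ≤ D := Finset.le_sup (f := fun n => n + max (a n) (b n)) hn
  have hshift (c : ℕ) : T^[k + n] (T^[c] y) = T^[n + c] (T^[k] y) := by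
    simp only [← Function.iterate_add_apply]
    congr 1
    omega
  have ha := hk (n + a n) (by omega)
  have hb := hk (n + b n) (by omega)
  refine ⟨_, haU, _, hbU, ?_⟩
  rw [hshift, hshift]
  rw [dist_comm] at ha
  have := dist_triangle4 (T^[n + a n] y) (T^[n + a n] (T^[k] y)) (T^[n + b n] (T^[k] y))
    (T^[n + b n] y)
  linarith

end Dynamics

theorem stmt10_general {X : Type*} [MetricSpace X] [CompactSpace X]
    {T : X → X} (hTc : Continuous T)
    (hM : MSystem T) (hts : ThicklySensitive T) :
    ThicklySyndeticallySensitive T := by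
  obtain ⟨δ, hδ, hthick⟩ := hts
  refine ⟨δ / 2, half_pos hδ, fun U hU N => ?_⟩
  obtain ⟨m, hm⟩ := hthick U hU N
  have hJ : ∀ n ∈ Finset.Icc m (m + N), n ∈ STset T U δ := by
    intro n hn
    obtain ⟨hmn, hnN⟩ := Finset.mem_Icc.1 hn
    simpa [Nat.add_sub_cancel' hmn] using hm (n - m) (by omega)
  obtain ⟨y, hy, a, b, hab⟩ := hM.exists_isMinimalPoint_forall_mem_STset hTc hU hJ
  refine (hy.syndeticSet_forall_add_mem_STset hTc hδ hab).of_forall_add_mem m fun k hk i hi => ?_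
  simpa [add_assoc] using hk (m + i) (Finset.mem_Icc.2 ⟨by omega, by omega⟩)

/-- A thickly sensitive M-system is thickly syndetically sensitive. -/
theorem stmt10 {X : Type*} [MetricSpace X] [CompactSpace X] [Nontrivial X]
    (hperf : ∀ x : X, (𝓝[≠] x).NeBot)
    {T : X → X} (hTc : Continuous T) (hTs : Function.Surjective T)
    (hM : MSystem T) (hts : ThicklySensitive T) :
    ThicklySyndeticallySensitive T :=
  stmt10_general hTc hM hts
end

section
/- If a dynamical system (X,T) is thickly syndetically transitive, then (X,T) is thickly syndetically sensitive. -/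
open Filter Topology Set Metric

/-!
Pick distinct points `a, b` and `δ = d(a, b) / 3`. If `Tⁿ` maps a point of `U` into `B(a, δ)`
and another into `B(b, δ)`, the triangle inequality separates their images by more than `δ`,
so `S_T(U, δ) ⊇ N_T(U, B(a, δ)) ∩ N_T(U, B(b, δ))`, and thickly syndetic sets are closed
under finite intersections and supersets.
-/

namespace ThicklySyndeticSet

theorem mono {A B : Set ℕ} (hA : ThicklySyndeticSet A) (hAB : A ⊆ B) : ThicklySyndeticSet B :=
  fun N ↦ (hA N).imp fun _ hM i ↦ (hM i).imp fun _ ⟨hj, hrun⟩ ↦ ⟨hj, fun k hk ↦ hAB (hrun k hk)⟩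

theorem inter {A B : Set ℕ} (hA : ThicklySyndeticSet A) (hB : ThicklySyndeticSet B) :
    ThicklySyndeticSet (A ∩ B) := by
  intro N
  obtain ⟨gapA, hgapA⟩ := hA N
  obtain ⟨gapB, hgapB⟩ := hB (N + gapA)
  refine ⟨gapB + gapA, fun i ↦ ?_⟩
  -- a run of `N + gapA` elements of `B` contains the start of a run of `N` elements of `A`
  obtain ⟨j, hj, hrunB⟩ := hgapB i
  obtain ⟨j', hj', hrunA⟩ := hgapA (i + j)
  refine ⟨j + j', by omega, fun k hk ↦ ⟨?_, ?_⟩⟩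
  · simpa only [add_assoc] using hrunA k hk
  · simpa only [add_assoc] using hrunB (j' + k) (by omega)

end ThicklySyndeticSet

theorem NTset_ball_inter_subset_STset {X : Type*} [MetricSpace X] (T : X → X) (U : Set X)
    {a b : X} {δ : ℝ} (hab : 3 * δ ≤ dist a b) :
    NTset T U (ball a δ) ∩ NTset T U (ball b δ) ⊆ STset T U δ := by
  rintro n ⟨⟨x, hxU, hxa⟩, ⟨y, hyU, hyb⟩⟩
  refine ⟨x, hxU, y, hyU, ?_⟩
  have hxa' : dist (T^[n] x) a < δ := hxa
  have hyb' : dist (T^[n] y) b < δ := hyb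
  have := dist_triangle4 a (T^[n] x) (T^[n] y) b
  rw [dist_comm a (T^[n] x)] at this
  linarith

theorem stmt12_general {X : Type*} [MetricSpace X] [Nontrivial X]
    {T : X → X}
    (h : ThicklySyndeticallyTransitive T) :
    ThicklySyndeticallySensitive T := by
  obtain ⟨a, b, hab⟩ := exists_pair_ne X
  have hδ : 0 < dist a b / 3 := div_pos (dist_pos.mpr hab) three_pos
  refine ⟨dist a b / 3, hδ, fun U hU ↦ ?_⟩
  have hBa : Opene (ball a (dist a b / 3)) := ⟨isOpen_ball, a, mem_ball_self hδ⟩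
  have hBb : Opene (ball b (dist a b / 3)) := ⟨isOpen_ball, b, mem_ball_self hδ⟩
  exact ((h U _ hU hBa).inter (h U _ hU hBb)).mono
    (NTset_ball_inter_subset_STset T U (by linarith))

/-- A thickly syndetically transitive system is thickly syndetically
sensitive. -/
theorem stmt12 {X : Type*} [MetricSpace X] [CompactSpace X] [Nontrivial X]
    (hperf : ∀ x : X, (𝓝[≠] x).NeBot)
    {T : X → X} (hTc : Continuous T) (hTs : Function.Surjective T)
    (h : ThicklySyndeticallyTransitive T) :
    ThicklySyndeticallySensitive T :=
  stmt12_general h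
end

section
/- Let (X,T) be a transitive compact dynamical system. Then the Lyapunov numbers 𝕃_r and 𝕃̄_r satisfy 𝕃_r = 𝕃̄_r > 0. -/
open Filter Topology Set Metric

/-!
Fix `x` and `z ∈ ω_{N_T}(x)`. For opene `U`, `V` the times `n` with `Tⁿx` near `z` and
`TⁿU ∩ V ≠ ∅` are unbounded: choosing `v ∈ V` off a finite orbit segment of a point of `U`
(no isolated points) rules out any given finite set of times. Hence, if `d(Tᵐz, Tᵐw) > t`,
each open set `⋃_{n > N} {y : d(Tⁿx, Tⁿy) > t}` is dense, and by Baire the points `y` with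
`d(Tⁿx, Tⁿy) > t` infinitely often are dense, in particular present near `x`. Sensitivity with
constant `δ` at `z` supplies such `Tᵐz, Tᵐw` with `t = δ`, so the sets defining `𝕃_r` and `𝕃̄_r`
coincide; and for `a ≠ b` every `z` is more than `d(a,b)/3` from `a` or from `b`, which gives
positivity.
-/

lemma Opene.infinite {Y : Type*} [TopologicalSpace Y] [T1Space Y]
    (hperf : ∀ y : Y, (𝓝[≠] y).NeBot) {V : Set Y} (hV : Opene V) : V.Infinite := by
  obtain ⟨v, hv⟩ := hV.2
  have := hperf v
  exact infinite_of_mem_nhds v (hV.1.mem_nhds hv)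

lemma dense_setOf_frequently_mem {Y : Type*} [TopologicalSpace Y] [BaireSpace Y]
    {P : ℕ → Set Y} (hP : ∀ n, IsOpen (P n))
    (h : ∀ O : Set Y, Opene O → ∀ N, ∃ n > N, (O ∩ P n).Nonempty) :
    Dense {y | ∃ᶠ n in atTop, y ∈ P n} := by
  have hdense : Dense (⋂ N, ⋃ n > N, P n) := by
    refine dense_iInter_of_isOpen_nat (fun N => isOpen_biUnion fun n _ => hP n) fun N => ?_
    refine dense_iff_inter_open.mpr fun O hO hOne => ?_
    obtain ⟨n, hnN, y, hyO, hyP⟩ := h O ⟨hO, hOne⟩ N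
    exact ⟨y, hyO, Set.mem_biUnion hnN hyP⟩
  refine hdense.mono fun y hy => frequently_atTop.mpr fun N => ?_
  obtain ⟨n, hnN, hyP⟩ := Set.mem_iUnion₂.mp (Set.mem_iInter.mp hy N)
  exact ⟨n, hnN.le, hyP⟩

section

variable {X : Type*} [MetricSpace X] {T : X → X}

lemma infinite_NTpt_inter_NTset (hTc : Continuous T) (hperf : ∀ x : X, (𝓝[≠] x).NeBot)
    {x z : X} (hz : z ∈ omegaNT T x) {G U V : Set X} (hG : IsOpen G) (hzG : z ∈ G)
    (hU : Opene U) (hV : Opene V) : (NTpt T x G ∩ NTset T U V).Infinite := by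
  refine Set.infinite_of_forall_exists_gt fun N => ?_
  obtain ⟨x₀, hx₀⟩ := hU.2
  obtain ⟨v, hvV, hv⟩ :=
    ((hV.infinite hperf).sdiff ((Set.finite_Iic N).image (T^[·] x₀))).nonempty
  -- Shrink `U ∋ x₀` and `V ∋ v` so that no `n ≤ N` is a transfer time between them.
  have hopen : IsOpen (⋂ n ∈ Set.Iic N, {p : X × X | T^[n] p.1 ≠ p.2}) :=
    (Set.finite_Iic N).isOpen_biInter fun n _ =>
      isOpen_ne_fun ((hTc.iterate n).comp continuous_fst) continuous_snd
  obtain ⟨W, V', hW, hV', hx₀W, hvV', hWV'⟩ := isOpen_prod_iff.mp hopen x₀ v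
    (Set.mem_iInter₂.mpr fun n hn hnv => hv ⟨n, hn, hnv⟩)
  obtain ⟨n, hnG, y, ⟨hyU, hyW⟩, hyV, hyV'⟩ :=
    hz G hG hzG (U ∩ W) (V ∩ V') ⟨hU.1.inter hW, x₀, hx₀, hx₀W⟩ ⟨hV.1.inter hV', v, hvV, hvV'⟩
  refine ⟨n, ⟨hnG, y, hyU, hyV⟩, not_le.mp fun hnN => ?_⟩
  exact Set.mem_iInter₂.mp (hWV' (Set.mk_mem_prod hyW hyV')) n hnN rfl

lemma exists_lt_dist_iterate_of_mem_omegaNT (hTc : Continuous T)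
    (hperf : ∀ x : X, (𝓝[≠] x).NeBot) {x z w : X} (hz : z ∈ omegaNT T x) {m : ℕ} {t : ℝ}
    (hd : t < dist (T^[m] z) (T^[m] w)) {O : Set X} (hO : Opene O) (N : ℕ) :
    ∃ n > N, ∃ y ∈ O, t < dist (T^[n] x) (T^[n] y) := by
  set ρ := (dist (T^[m] z) (T^[m] w) - t) / 2 with hρ
  have hρpos : 0 < ρ := by linarith
  have hcont := hTc.iterate m
  obtain ⟨n, ⟨hnx, y, hyO, hny⟩, hNn⟩ := (infinite_NTpt_inter_NTset hTc hperf hz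
    (isOpen_ball.preimage hcont) (mem_ball_self hρpos : T^[m] z ∈ ball _ ρ) hO
    ⟨isOpen_ball.preimage hcont, w, mem_ball_self hρpos⟩).exists_gt N
  refine ⟨m + n, by omega, y, hyO, ?_⟩
  have hx : dist (T^[m + n] x) (T^[m] z) < ρ := by rw [Function.iterate_add_apply]; exact hnx
  have hy : dist (T^[m + n] y) (T^[m] w) < ρ := by rw [Function.iterate_add_apply]; exact hny
  have := dist_triangle4 (T^[m] z) (T^[m + n] x) (T^[m + n] y) (T^[m] w)
  rw [dist_comm] at hx
  linarith

lemma exists_lt_limsup_dist_of_mem_omegaNT [CompactSpace X] (hTc : Continuous T)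
    (hperf : ∀ x : X, (𝓝[≠] x).NeBot) {x z w : X} (hz : z ∈ omegaNT T x) {m : ℕ} {t : ℝ}
    (hd : t < dist (T^[m] z) (T^[m] w)) {U : Set X} (hU : IsOpen U) (hxU : x ∈ U) :
    ∃ y ∈ U, t < limsup (fun n => dist (T^[n] x) (T^[n] y)) atTop := by
  obtain ⟨t', htt', ht'd⟩ := exists_between hd
  have hdense : Dense {y | ∃ᶠ n in atTop, y ∈ {y' | t' < dist (T^[n] x) (T^[n] y')}} :=
    dense_setOf_frequently_mem
      (fun n => isOpen_lt continuous_const (continuous_const.dist (hTc.iterate n)))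
      fun O hO N => exists_lt_dist_iterate_of_mem_omegaNT hTc hperf hz ht'd hO N
  obtain ⟨y, hyU, hy⟩ := hdense.inter_open_nonempty U hU ⟨x, hxU⟩
  have hbdd : IsBoundedUnder (· ≤ ·) atTop fun n => dist (T^[n] x) (T^[n] y) :=
    isBoundedUnder_of ⟨diam (univ : Set X), fun n =>
      dist_le_diam_of_mem isCompact_univ.isBounded (mem_univ _) (mem_univ _)⟩
  exact ⟨y, hyU, htt'.trans_le (le_limsup_of_frequently_le (hy.mono fun _ hn => hn.le) hbdd)⟩

lemma exists_lt_dist_iterate_of_lt_limsup {x y : X} {δ : ℝ}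
    (h : δ < limsup (fun n => dist (T^[n] x) (T^[n] y)) atTop) :
    ∃ n, δ < dist (T^[n] x) (T^[n] y) :=
  (frequently_lt_of_lt_limsup (isCoboundedUnder_le_of_le atTop fun _ => dist_nonneg) h).exists

lemma forall_exists_lt_dist_iff_limsup [CompactSpace X] (hTc : Continuous T)
    (hperf : ∀ x : X, (𝓝[≠] x).NeBot) (htc : TransCompact T) (δ : ℝ) :
    (∀ x : X, ∀ U : Set X, IsOpen U → x ∈ U → ∃ y ∈ U, ∃ n : ℕ, δ < dist (T^[n] x) (T^[n] y)) ↔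
      ∀ x : X, ∀ U : Set X, IsOpen U → x ∈ U →
        ∃ y ∈ U, δ < limsup (fun n : ℕ => dist (T^[n] x) (T^[n] y)) atTop := by
  refine ⟨fun h x U hU hxU => ?_, fun h x U hU hxU => ?_⟩
  · obtain ⟨z, hz⟩ := htc x
    obtain ⟨w, -, m, hd⟩ := h z univ isOpen_univ (mem_univ z)
    exact exists_lt_limsup_dist_of_mem_omegaNT hTc hperf hz hd hU hxU
  · obtain ⟨y, hyU, hy⟩ := h x U hU hxU
    exact ⟨y, hyU, exists_lt_dist_iterate_of_lt_limsup hy⟩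

lemma exists_pos_forall_lt_limsup_dist [CompactSpace X] [Nontrivial X] (hTc : Continuous T)
    (hperf : ∀ x : X, (𝓝[≠] x).NeBot) (htc : TransCompact T) :
    ∃ δ > 0, ∀ x : X, ∀ U : Set X, IsOpen U → x ∈ U →
      ∃ y ∈ U, δ < limsup (fun n : ℕ => dist (T^[n] x) (T^[n] y)) atTop := by
  obtain ⟨a, b, hab⟩ := exists_pair_ne X
  have hpos := dist_pos.mpr hab
  refine ⟨dist a b / 3, by positivity, fun x U hU hxU => ?_⟩
  obtain ⟨z, hz⟩ := htc x
  obtain ⟨w, hw⟩ : ∃ w, dist a b / 3 < dist z w := by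
    by_contra! hfar
    linarith [dist_triangle_left a b z, hfar a, hfar b]
  exact exists_lt_limsup_dist_of_mem_omegaNT (m := 0) hTc hperf hz hw hU hxU

end

theorem stmt13_general {X : Type*} [MetricSpace X] [CompactSpace X] [Nontrivial X]
    (hperf : ∀ x : X, (𝓝[≠] x).NeBot)
    {T : X → X} (hTc : Continuous T)
    (htc : TransCompact T) :
    LyapR T = LyapRbar T ∧ 0 < LyapR T := by
  have hiff := forall_exists_lt_dist_iff_limsup hTc hperf htc
  have heq : LyapR T = LyapRbar T := by
    unfold LyapR LyapRbar
    simp_rw [hiff]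
  obtain ⟨δ, hδ, hδlim⟩ := exists_pos_forall_lt_limsup_dist hTc hperf htc
  have hbdd : BddAbove {δ : ℝ | 0 < δ ∧ ∀ x : X, ∀ U : Set X, IsOpen U → x ∈ U →
      ∃ y ∈ U, ∃ n : ℕ, δ < dist (T^[n] x) (T^[n] y)} := by
    refine ⟨diam (univ : Set X), fun δ' ⟨_, h⟩ => ?_⟩
    obtain ⟨y, -, n, hn⟩ := h (Classical.arbitrary X) univ isOpen_univ (mem_univ _)
    exact hn.le.trans (dist_le_diam_of_mem isCompact_univ.isBounded (mem_univ _) (mem_univ _))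
  exact ⟨heq, hδ.trans_le (le_csSup hbdd ⟨hδ, (hiff δ).mpr hδlim⟩)⟩

/-- For a transitive compact system, `𝕃_r = 𝕃̄_r > 0`. -/
theorem stmt13 {X : Type*} [MetricSpace X] [CompactSpace X] [Nontrivial X]
    (hperf : ∀ x : X, (𝓝[≠] x).NeBot)
    {T : X → X} (hTc : Continuous T) (hTs : Function.Surjective T)
    (htc : TransCompact T) :
    LyapR T = LyapRbar T ∧ 0 < LyapR T :=
  stmt13_general hperf hTc htc
end

section
/- Let (X,T) be a dynamical system whose set of distal points is dense in X. Then the Lyapunov numbers 𝕃_{m,r} and 𝕃̄_{m,r} satisfy 𝕃_{m,r} = 𝕃̄_{m,r}. -/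
open Filter Topology Set Metric

/-!
A limsup above `δ` is exceeded at some time, so `𝕃̄_{m,r} ≤ 𝕃_{m,r}`. Conversely, let `δ` be
admissible for `𝕃_{m,r}` and fix a finite family of points `x i` with neighbourhoods `U i`.
Applying the definition to `T^j`-preimages of the `x i` shows, by surjectivity, that the times at
which the family can be `δ`-separated from perturbations inside the `U i` form a thick set; hence
they lie in an idempotent ultrafilter `u` on `ℕ` that converges to infinity. For the action
`u·p = u-lim Tⁿ p` we have `u·(u·p) = u·p`, so distal points are fixed by it (`u·q` is proximal
to `q` and lies in its orbit closure) and `Tᵐ x` is close to `Tᵐ (u·x)` for `u`-most `m`. Pick such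
a separation time `m` and, by density, distal `q i ∈ U i` with `Tᵐ q i` far from `Tᵐ x i`. Along
`u`, `T^{m+t} (x i, q i)` tends to `(Tᵐ (u·x i), Tᵐ q i)`, a pair almost `δ` apart, so the `q i`
stay almost `δ`-separated from the `x i` at infinitely many times.
-/

open Function

attribute [local instance] Ultrafilter.add Ultrafilter.addSemigroup

section UltrafilterLimit

variable {X : Type*} [TopologicalSpace X] [CompactSpace X]

theorem Ultrafilter.tendsto_lim_map {α : Type*} (u : Ultrafilter α) (f : α → X) :
    Tendsto f u (𝓝 (u.map f).lim) :=
  Ultrafilter.le_nhds_lim _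

theorem Ultrafilter.lim_map_eq [T2Space X] {α : Type*} {u : Ultrafilter α} {f : α → X} {x : X}
    (h : Tendsto f u (𝓝 x)) : (u.map f).lim = x :=
  Ultrafilter.lim_eq_iff_le_nhds.2 h

theorem Ultrafilter.tendsto_lim_map_add [T2Space X] {M : Type*} [Add M] {u : Ultrafilter M}
    (hu : u + u = u) (f : M → X) :
    Tendsto (fun m => (u.map fun n => f (m + n)).lim) u (𝓝 (u.map f).lim) := by
  refine (closed_nhds_basis _).tendsto_right_iff.2 fun V ⟨hV, hVc⟩ => ?_
  have h : ∀ᶠ k in (u : Filter M), f k ∈ V := u.tendsto_lim_map f hV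
  rw [← hu, Ultrafilter.eventually_add] at h
  exact h.mono fun m hm => hVc.mem_of_tendsto (u.tendsto_lim_map _) hm

end UltrafilterLimit

theorem Ultrafilter.exists_add_self_le_atTop_mem_of_thick {N : Set ℕ} (hN : ThickSet N) :
    ∃ u : Ultrafilter ℕ, u + u = u ∧ (u : Filter ℕ) ≤ atTop ∧ N ∈ u := by
  set s : Set (Ultrafilter ℕ) := ⋂ n, {v | {m | n ≤ m ∧ m + n ∈ N} ∈ v}
  have hs_closed : IsClosed s := isClosed_iInter fun n => ultrafilter_isClosed_basic _
  have hs_add : ∀ v ∈ s, ∀ w ∈ s, v + w ∈ s := by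
    simp only [s, mem_iInter, mem_ofPred_eq]
    refine fun v _ w hw n => (Ultrafilter.eventually_add v w _).2 <| .of_forall fun m => ?_
    exact Eventually.mono (hw (m + n)) fun m' ⟨h₁, h₂⟩ => ⟨by omega, by convert h₂ using 1; ring⟩
  choose a ha using hN
  -- `a (2 * L) + L` lies beyond `L` and starts a block of length `L` inside `N`
  have hs_ne : Ultrafilter.map (fun L => a (2 * L) + L) (Ultrafilter.of atTop) ∈ s := by
    refine mem_iInter.2 fun n => Ultrafilter.of_le atTop <| (eventually_ge_atTop n).mono
      fun L hL => ?_
    dsimp only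
    exact ⟨by omega, by simpa only [add_assoc] using ha (2 * L) (L + n) (by omega)⟩
  obtain ⟨u, hu, huu⟩ := exists_idempotent_in_compact_add_subsemigroup
    Ultrafilter.continuous_add_left s ⟨_, hs_ne⟩ hs_closed.isCompact hs_add
  rw [mem_iInter] at hu
  refine ⟨u, huu, atTop_basis.ge_iff.2 fun n _ => mem_of_superset (hu n) fun m hm => hm.1, ?_⟩
  simpa using hu 0

section OrbitLimit

variable {X : Type*} [TopologicalSpace X] [CompactSpace X] {T : X → X}

noncomputable def orbitLim (u : Ultrafilter ℕ) (T : X → X) (p : X) : X :=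
  (u.map fun n => T^[n] p).lim

theorem tendsto_orbitLim (u : Ultrafilter ℕ) (T : X → X) (p : X) :
    Tendsto (fun n => T^[n] p) u (𝓝 (orbitLim u T p)) :=
  u.tendsto_lim_map _

theorem tendsto_iterate_add_orbitLim (hT : Continuous T) (u : Ultrafilter ℕ) (m : ℕ) (p : X) :
    Tendsto (fun n => T^[m + n] p) u (𝓝 (T^[m] (orbitLim u T p))) := by
  simp only [iterate_add_apply]
  exact ((hT.iterate m).tendsto _).comp (tendsto_orbitLim u T p)

theorem orbitLim_orbitLim [T2Space X] {u : Ultrafilter ℕ} (hu : u + u = u) (hT : Continuous T)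
    (p : X) : orbitLim u T (orbitLim u T p) = orbitLim u T p := by
  have h : (fun m => T^[m] (orbitLim u T p)) = fun m => (u.map fun n => T^[m + n] p).lim :=
    funext fun m => (Ultrafilter.lim_map_eq (tendsto_iterate_add_orbitLim hT u m p)).symm
  rw [orbitLim, h]
  exact Ultrafilter.lim_map_eq (Ultrafilter.tendsto_lim_map_add hu fun n => T^[n] p)

end OrbitLimit

section DistalPoint

variable {X : Type*} [MetricSpace X] [CompactSpace X] {T : X → X} {u : Ultrafilter ℕ}

theorem tendsto_dist_iterate_orbitLim (hu : u + u = u) (hT : Continuous T) (p : X) :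
    Tendsto (fun n => dist (T^[n] p) (T^[n] (orbitLim u T p))) u (𝓝 0) := by
  have h := (tendsto_orbitLim u T p).dist (tendsto_orbitLim u T (orbitLim u T p))
  rwa [orbitLim_orbitLim hu hT, dist_self] at h

theorem IsDistalPoint.orbitLim_eq (hu : u + u = u) (hu_atTop : (u : Filter ℕ) ≤ atTop)
    (hT : Continuous T) {q : X} (hq : IsDistalPoint T q) : orbitLim u T q = q := by
  by_contra hne
  have hmem : orbitLim u T q ∈ closure (range fun n => T^[n] q) :=
    mem_closure_of_tendsto (tendsto_orbitLim u T q) (.of_forall mem_range_self)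
  set l := liminf (fun n => dist (T^[n] q) (T^[n] (orbitLim u T q))) atTop
  have hl : 0 < l := hq _ hmem hne
  have hfreq : ∃ᶠ n in atTop, dist (T^[n] q) (T^[n] (orbitLim u T q)) ≤ l / 2 :=
    ((tendsto_dist_iterate_orbitLim hu hT q).eventually
      (ge_mem_nhds (half_pos hl))).frequently.filter_mono hu_atTop
  linarith [liminf_le_of_frequently_le hfreq (isBoundedUnder_of ⟨0, fun _ => dist_nonneg⟩)]

end DistalPoint

section Separation

variable {X : Type*} [MetricSpace X] {T : X → X}

/-- The condition on `δ` in the definition of `𝕃_{m,r}`, for families indexed by any finite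
type. -/
def SimultaneouslySensitive (T : X → X) (δ : ℝ) : Prop :=
  ∀ (ι : Type) [Finite ι] (x : ι → X) (U : ι → Set X), (∀ i, IsOpen (U i)) → (∀ i, x i ∈ U i) →
    ∃ y : ι → X, (∀ i, y i ∈ U i) ∧ ∃ n, ∀ i, δ < dist (T^[n] (x i)) (T^[n] (y i))

theorem lt_minDist_iff {k : ℕ} {x y : Fin (k + 1) → X} {n : ℕ} {δ : ℝ} :
    δ < minDist T x y n ↔ ∀ i, δ < dist (T^[n] (x i)) (T^[n] (y i)) := by
  simp [minDist, Finset.lt_inf'_iff]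

theorem simultaneouslySensitive_of_fin {δ : ℝ}
    (h : ∀ (k : ℕ) (x : Fin (k + 1) → X) (U : Fin (k + 1) → Set X),
      (∀ i, IsOpen (U i) ∧ x i ∈ U i) → ∃ y : Fin (k + 1) → X, (∀ i, y i ∈ U i) ∧
        ∃ n : ℕ, δ < minDist T x y n) :
    SimultaneouslySensitive T δ := by
  intro ι _ x U hU hx
  obtain ⟨_ | k, ⟨e⟩⟩ := Finite.exists_equiv_fin ι
  · exact ⟨x, hx, 0, fun i => (e i).elim0⟩
  obtain ⟨y, hyU, n, hn⟩ := h k (x ∘ e.symm) (U ∘ e.symm) fun i => ⟨hU _, hx _⟩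
  refine ⟨y ∘ e, fun i => by simpa using hyU (e i), n, fun i => ?_⟩
  simpa using lt_minDist_iff.1 hn (e i)

def separationTimes (T : X → X) (δ : ℝ) {ι : Type*} (x : ι → X) (U : ι → Set X) : Set ℕ :=
  {n | ∃ y : ι → X, (∀ i, y i ∈ U i) ∧ ∀ i, δ < dist (T^[n] (x i)) (T^[n] (y i))}

theorem thickSet_separationTimes [Nonempty X] (hT : Continuous T) (hTs : Surjective T) {δ : ℝ}
    (hδ : 0 < δ) (hS : SimultaneouslySensitive T δ) {ι : Type} [Finite ι] (x : ι → X)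
    {U : ι → Set X} (hU : ∀ i, IsOpen (U i)) (hx : ∀ i, x i ∈ U i) :
    ThickSet (separationTimes T δ x U) := by
  intro L
  -- separating the `T^[j]`-preimage `p (i, j)` of `x i` at time `n` separates `x i` at `n - j`
  choose p hp using fun ij : ι × Fin (L + 1) => hTs.iterate ij.2 (x ij.1)
  -- perturbations of `c` inside `B` cannot be separated before time `L`
  obtain ⟨c⟩ := ‹Nonempty X›
  set B : Set X := ⋂ t : Fin (L + 1), T^[t] ⁻¹' ball (T^[t] c) δ
  have hB : IsOpen B :=
    isOpen_iInter_of_finite fun t => (hT.iterate t).isOpen_preimage _ isOpen_ball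
  have hcB : c ∈ B := mem_iInter.2 fun t => mem_ball_self hδ
  obtain ⟨y, hyU, n, hn⟩ := hS (Option (ι × Fin (L + 1))) (fun o => o.elim c p)
    (fun o => o.elim B fun ij => T^[ij.2] ⁻¹' U ij.1)
    (fun o => o.rec hB fun ij => (hT.iterate _).isOpen_preimage _ (hU _))
    (fun o => o.rec hcB fun ij => by simpa [hp] using hx ij.1)
  have hLn : L ≤ n := by
    by_contra! hnL
    have hfar : δ < dist (T^[n] c) (T^[n] (y none)) := hn none
    have hnear : dist (T^[n] (y none)) (T^[n] c) < δ := mem_iInter.1 (hyU none) ⟨n, by omega⟩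
    linarith [dist_comm (T^[n] c) (T^[n] (y none))]
  refine ⟨n - L, fun j hj => ?_⟩
  let ij : ι → ι × Fin (L + 1) := fun i => (i, ⟨L - j, by omega⟩)
  refine ⟨fun i => T^[L - j] (y (some (ij i))), fun i => hyU (some (ij i)), fun i => ?_⟩
  have h : δ < dist (T^[n] (p (ij i))) (T^[n] (y (some (ij i)))) := hn (some (ij i))
  rwa [← hp (ij i), ← iterate_add_apply, ← iterate_add_apply,
    show n - L + j + (L - j) = n by omega]

theorem exists_frequently_forall_lt_dist [CompactSpace X] [Nonempty X] (hT : Continuous T)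
    (hTs : Surjective T) (hd : Dense {x | IsDistalPoint T x}) {δ δ' : ℝ} (hδ : 0 < δ)
    (hδ' : δ' < δ) (hS : SimultaneouslySensitive T δ) {ι : Type} [Finite ι] (x : ι → X)
    {U : ι → Set X} (hU : ∀ i, IsOpen (U i)) (hx : ∀ i, x i ∈ U i) :
    ∃ y : ι → X, (∀ i, y i ∈ U i) ∧
      ∃ᶠ n in atTop, ∀ i, δ' < dist (T^[n] (x i)) (T^[n] (y i)) := by
  obtain ⟨u, hu, hu_atTop, hN⟩ := Ultrafilter.exists_add_self_le_atTop_mem_of_thick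
    (thickSet_separationTimes hT hTs hδ hS x hU hx)
  have hclose : ∀ᶠ m in (u : Filter ℕ), ∀ i,
      dist (T^[m] (x i)) (T^[m] (orbitLim u T (x i))) < δ - δ' :=
    eventually_all.2 fun i =>
      (tendsto_dist_iterate_orbitLim hu hT (x i)).eventually (gt_mem_nhds (sub_pos.2 hδ'))
  obtain ⟨m, ⟨y, hyU, hy⟩, hm⟩ := ((eventually_of_mem hN fun _ => id).and hclose).exists
  have hq : ∀ i, ∃ q, q ∈ U i ∩ T^[m] ⁻¹' {z | δ < dist (T^[m] (x i)) z} ∧ IsDistalPoint T q :=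
    fun i => hd.inter_open_nonempty _
      ((hU i).inter ((isOpen_lt continuous_const (continuous_const.dist continuous_id)).preimage
        (hT.iterate m))) ⟨y i, hyU i, hy i⟩
  choose q hqU hqd using hq
  refine ⟨q, fun i => (hqU i).1, ?_⟩
  have hfar : ∀ i, δ' < dist (T^[m] (orbitLim u T (x i))) (T^[m] (q i)) := fun i => by
    have hqi : δ < dist (T^[m] (x i)) (T^[m] (q i)) := (hqU i).2
    linarith [hm i, dist_triangle (T^[m] (x i)) (T^[m] (orbitLim u T (x i))) (T^[m] (q i))]
  have hev : ∀ᶠ t in (u : Filter ℕ), ∀ i, δ' < dist (T^[m + t] (x i)) (T^[m + t] (q i)) := by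
    refine eventually_all.2 fun i => ?_
    have hqi := tendsto_iterate_add_orbitLim hT u m (q i)
    rw [(hqd i).orbitLim_eq hu hu_atTop hT] at hqi
    exact ((tendsto_iterate_add_orbitLim hT u m (x i)).dist hqi).eventually (lt_mem_nhds (hfar i))
  exact (tendsto_atTop_mono (Nat.le_add_left · m) tendsto_id).frequently
    (hev.frequently.filter_mono hu_atTop)

theorem exists_lt_minDist_of_lt_limsup {k : ℕ} {x y : Fin (k + 1) → X} {δ : ℝ}
    (h : δ < limsup (fun n => minDist T x y n) atTop) : ∃ n, δ < minDist T x y n :=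
  (frequently_lt_of_lt_limsup (isCoboundedUnder_le_of_le atTop fun _ =>
    Finset.le_inf' _ _ fun _ _ => dist_nonneg) h).exists

theorem le_limsup_minDist_of_frequently [CompactSpace X] {k : ℕ} {x y : Fin (k + 1) → X} {δ : ℝ}
    (h : ∃ᶠ n in atTop, ∀ i, δ < dist (T^[n] (x i)) (T^[n] (y i))) :
    δ ≤ limsup (fun n => minDist T x y n) atTop :=
  le_limsup_of_frequently_le (h.mono fun _ hn => (lt_minDist_iff.2 hn).le) <|
    isBoundedUnder_of ⟨diam (univ : Set X), fun _ => (Finset.inf'_le _ (Finset.mem_univ 0)).trans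
      (dist_le_diam_of_mem isCompact_univ.isBounded (mem_univ _) (mem_univ _))⟩

end Separation

theorem Real.sSup_eq_of_forall_Ioo_subset {S S' : Set ℝ} (hsub : S' ⊆ S)
    (hpos : ∀ δ ∈ S, 0 < δ) (hIoo : ∀ δ ∈ S, Ioo 0 δ ⊆ S') : sSup S' = sSup S := by
  have hlt : ∀ δ ∈ S, ∀ c < δ, ∃ δ' ∈ S', c < δ' := fun δ hδ c hc => by
    obtain ⟨δ', hδ'₁, hδ'₂⟩ := exists_between (max_lt hc (hpos δ hδ))
    exact ⟨δ', hIoo δ hδ ⟨(le_max_right _ _).trans_lt hδ'₁, hδ'₂⟩,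
      (le_max_left _ _).trans_lt hδ'₁⟩
  rcases S.eq_empty_or_nonempty with rfl | ⟨δ₀, hδ₀⟩
  · rw [subset_empty_iff.1 hsub]
  by_cases hbdd : BddAbove S
  · obtain ⟨δ₁, hδ₁, -⟩ := hlt δ₀ hδ₀ 0 (hpos δ₀ hδ₀)
    refine le_antisymm (csSup_le_csSup hbdd ⟨δ₁, hδ₁⟩ hsub) (csSup_le ⟨δ₀, hδ₀⟩ fun δ hδ => ?_)
    refine le_of_forall_lt fun c hc => ?_
    obtain ⟨δ', hδ', hcδ'⟩ := hlt δ hδ c hc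
    exact hcδ'.trans_le (le_csSup (hbdd.mono hsub) hδ')
  · have hbdd' : ¬BddAbove S' := fun ⟨b, hb⟩ => hbdd ⟨b, fun δ hδ => le_of_not_gt fun hbδ =>
      let ⟨_, hδ', hbδ'⟩ := hlt δ hδ b hbδ
      (hb hδ').not_gt hbδ'⟩
    rw [Real.sSup_of_not_bddAbove hbdd, Real.sSup_of_not_bddAbove hbdd']

theorem stmt14_general {X : Type*} [MetricSpace X] [CompactSpace X]
    {T : X → X} (hTc : Continuous T) (hTs : Function.Surjective T)
    (hd : Dense {x : X | IsDistalPoint T x}) :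
    LyapMR T = LyapMRbar T := by
  refine (Real.sSup_eq_of_forall_Ioo_subset ?_ (fun δ hδ => hδ.1) ?_).symm
  · rintro δ ⟨hδ, h⟩
    refine ⟨hδ, fun k x U hU => ?_⟩
    obtain ⟨y, hyU, hy⟩ := h k x U hU
    exact ⟨y, hyU, exists_lt_minDist_of_lt_limsup hy⟩
  · rintro δ ⟨hδ, h⟩ δ' ⟨hδ', hδ'δ⟩
    refine ⟨hδ', fun k x U hU => ?_⟩
    have : Nonempty X := ⟨x 0⟩
    obtain ⟨δ'', hδ'δ'', hδ''δ⟩ := exists_between hδ'δ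
    obtain ⟨y, hyU, hy⟩ := exists_frequently_forall_lt_dist hTc hTs hd hδ hδ''δ
      (simultaneouslySensitive_of_fin h) x (fun i => (hU i).1) (fun i => (hU i).2)
    exact ⟨y, hyU, hδ'δ''.trans_le (le_limsup_minDist_of_frequently hy)⟩

/-- If the set of distal points is dense, then `𝕃_{m,r} = 𝕃̄_{m,r}`. -/
theorem stmt14 {X : Type*} [MetricSpace X] [CompactSpace X] [Nontrivial X]
    (hperf : ∀ x : X, (𝓝[≠] x).NeBot)
    {T : X → X} (hTc : Continuous T) (hTs : Function.Surjective T)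
    (hd : Dense {x : X | IsDistalPoint T x}) :
    LyapMR T = LyapMRbar T :=
  stmt14_general hTc hTs hd
end

section
/- Let (X,T) be a multi-sensitive dynamical system. Then (X,T) has positive topological sequence entropy; in fact there exists a strictly increasing sequence N in ℕ with h_N(T) ≥ log 2. -/
open Filter Topology Set Metric

/-!
Fix a multi-sensitivity constant `δ`. Apply multi-sensitivity at once to the `2^k` current cells
and to a small open set that cannot be `δ`-spread before the previous time: this gives a later
time `n_k` at which every cell contains two points more than `δ` apart under `T^[n_k]`. Splitting
each cell around two such points produces `2^(k+1)` nested open cells, any two of which are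
`δ`-apart at one of the times `n_0 < ⋯ < n_k`. One point per cell is then a
`(k+1, T, δ)`-separated set of size `2^(k+1)` along `(n_k)`, so `h_N(T) ≥ log 2`.
-/

section Separation

variable {X Y : Type*} [MetricSpace Y]

def SeparatedUnder (f : X → Y) (δ : ℝ) (A B : Set X) : Prop :=
  ∀ u ∈ A, ∀ v ∈ B, δ < dist (f u) (f v)

theorem SeparatedUnder.symm {f : X → Y} {δ : ℝ} {A B : Set X}
    (h : SeparatedUnder f δ A B) : SeparatedUnder f δ B A :=
  fun u hu v hv => dist_comm (f u) (f v) ▸ h v hv u hu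

theorem SeparatedUnder.mono {f : X → Y} {δ : ℝ} {A B A' B' : Set X}
    (h : SeparatedUnder f δ A B) (hA : A' ⊆ A) (hB : B' ⊆ B) : SeparatedUnder f δ A' B' :=
  fun u hu v hv => h u (hA hu) v (hB hv)

theorem exists_opene_subset_separatedUnder [TopologicalSpace X] {f : X → Y} (hf : Continuous f)
    {δ : ℝ} {U : Set X} (hU : IsOpen U) {x y : X} (hx : x ∈ U) (hy : y ∈ U)
    (hxy : δ < dist (f x) (f y)) :
    ∃ A B : Set X, Opene A ∧ Opene B ∧ A ⊆ U ∧ B ⊆ U ∧ SeparatedUnder f δ A B := by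
  set r := (dist (f x) (f y) - δ) / 2 with hr_def
  have hr : 0 < r := half_pos (sub_pos.2 hxy)
  refine ⟨U ∩ f ⁻¹' ball (f x) r, U ∩ f ⁻¹' ball (f y) r,
    ⟨hU.inter (isOpen_ball.preimage hf), x, hx, mem_ball_self hr⟩,
    ⟨hU.inter (isOpen_ball.preimage hf), y, hy, mem_ball_self hr⟩,
    inter_subset_left, inter_subset_left, ?_⟩
  rintro u ⟨-, hu⟩ v ⟨-, hv⟩
  rw [mem_preimage, mem_ball] at hu hv
  linarith [dist_triangle4 (f x) (f u) (f v) (f y), dist_comm (f x) (f u)]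

end Separation

section Dynamics

variable {X : Type*} [MetricSpace X] {T : X → X}

def dynBall (T : X → X) (J : Finset ℕ) (c : X) (r : ℝ) : Set X :=
  ⋂ j ∈ J, T^[j] ⁻¹' ball (T^[j] c) r

theorem isOpen_dynBall (hTc : Continuous T) (J : Finset ℕ) (c : X) (r : ℝ) :
    IsOpen (dynBall T J c r) :=
  isOpen_biInter_finset fun j _ => isOpen_ball.preimage (hTc.iterate j)

theorem mem_dynBall_self (J : Finset ℕ) (c : X) {r : ℝ} (hr : 0 < r) : c ∈ dynBall T J c r :=
  mem_iInter₂.2 fun _ _ => mem_ball_self hr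

theorem dist_lt_of_mem_dynBall {J : Finset ℕ} {c x y : X} {r : ℝ} (hx : x ∈ dynBall T J c r)
    (hy : y ∈ dynBall T J c r) {j : ℕ} (hj : j ∈ J) : dist (T^[j] x) (T^[j] y) < 2 * r := by
  have hxc := mem_iInter₂.1 hx j hj
  have hyc := mem_iInter₂.1 hy j hj
  rw [mem_preimage, mem_ball] at hxc hyc
  linarith [dist_triangle_right (T^[j] x) (T^[j] y) (T^[j] c)]

theorem bddAbove_card_isSepSet [CompactSpace X] (hTc : Continuous T) (ns : ℕ → ℕ) (k : ℕ)
    {ε : ℝ} (hε : 0 < ε) :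
    BddAbove {r : ℕ | ∃ E : Finset X, IsSepSet T ns k ε ↑E ∧ E.card = r} := by
  set J := (Finset.range k).image ns
  obtain ⟨t, ht⟩ := CompactSpace.elim_nhds_subcover (fun c => dynBall T J c (ε / 2))
    fun c => (isOpen_dynBall hTc J c _).mem_nhds (mem_dynBall_self J c (half_pos hε))
  have hcover : ∀ a : X, ∃ c ∈ t, a ∈ dynBall T J c (ε / 2) := fun a => by
    have ha : a ∈ ⋃ c ∈ t, dynBall T J c (ε / 2) := ht ▸ mem_univ a
    simpa using ha
  choose center hcenter_mem hcenter using hcover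
  refine ⟨t.card, ?_⟩
  rintro _ ⟨E, hE, rfl⟩
  refine Finset.card_le_card_of_injOn center (fun a _ => hcenter_mem a) fun a ha b hb hab => ?_
  by_contra hne
  obtain ⟨j, hj, hfar⟩ := hE a ha b hb hne
  have hclose := dist_lt_of_mem_dynBall (hcenter a) (hab ▸ hcenter b)
    (Finset.mem_image_of_mem ns (Finset.mem_range.2 hj))
  linarith

theorem card_le_sepNum [CompactSpace X] (hTc : Continuous T) {ns : ℕ → ℕ} {k : ℕ} {ε : ℝ}
    (hε : 0 < ε) {ι : Type*} [Fintype ι] {U : ι → Set X} (hU : ∀ i, (U i).Nonempty)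
    (hsep : Pairwise fun i i' => ∃ j < k, SeparatedUnder (T^[ns j]) ε (U i) (U i')) :
    Fintype.card ι ≤ sepNum T ns k ε := by
  classical
  choose x hx using hU
  have hx_inj : Function.Injective x := fun i i' hii' => by
    by_contra hne
    obtain ⟨j, -, hfar⟩ := hsep hne
    have := hfar _ (hx i) _ (hx i')
    rw [hii', dist_self] at this
    linarith
  refine le_csSup (bddAbove_card_isSepSet hTc ns k hε) ⟨Finset.univ.image x, ?_, ?_⟩
  · simp only [IsSepSet, Finset.coe_image, Finset.coe_univ, image_univ, forall_mem_range]
    intro i i' hne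
    obtain ⟨j, hj, hfar⟩ := hsep fun h => hne (congrArg x h)
    exact ⟨j, hj, hfar _ (hx i) _ (hx i')⟩
  · rw [Finset.card_image_of_injective _ hx_inj, Finset.card_univ]

theorem log_le_seqEntropy {ns : ℕ → ℕ} {ε b : ℝ} (hε : 0 < ε) (hb : 0 < b)
    (h : ∀ᶠ k in atTop, b ^ k ≤ (sepNum T ns k ε : ℝ)) :
    (Real.log b : EReal) ≤ seqEntropy T ns := by
  refine le_iSup₂_of_le ε hε (le_limsup_of_frequently_le' (Eventually.frequently ?_))
  filter_upwards [h, eventually_ge_atTop 1] with k hk hk1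
  have hk0 : (0 : ℝ) < k := by exact_mod_cast hk1
  rw [EReal.coe_le_coe_iff, le_div_iff₀ hk0, mul_comm, ← Real.log_pow]
  exact Real.log_le_log (pow_pos hb k) hk

def MultiSensitiveWith (T : X → X) (δ : ℝ) : Prop :=
  ∀ (k : ℕ) (U : Fin (k + 1) → Set X), (∀ i, Opene (U i)) → (⋂ i, STset T (U i) δ).Nonempty

theorem exists_opene_STset_subset_Ioi [Nonempty X] (hTc : Continuous T) {δ : ℝ} (hδ : 0 < δ)
    (m : ℕ) : ∃ V : Set X, Opene V ∧ STset T V δ ⊆ Ioi m := by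
  obtain ⟨z⟩ := ‹Nonempty X›
  refine ⟨dynBall T (Finset.range (m + 1)) z (δ / 2),
    ⟨isOpen_dynBall hTc _ z _, z, mem_dynBall_self _ z (half_pos hδ)⟩, ?_⟩
  rintro n ⟨x, hx, y, hy, hfar⟩
  by_contra hle
  have hclose := dist_lt_of_mem_dynBall hx hy
    (Finset.mem_range.2 (Nat.lt_succ_of_le (not_lt.1 hle)))
  linarith

theorem MultiSensitiveWith.exists_gt_forall_mem_STset [Nonempty X] (hTc : Continuous T)
    {δ : ℝ} (hδ : 0 < δ) (hms : MultiSensitiveWith T δ) {ι : Type*} [Fintype ι]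
    {U : ι → Set X} (hU : ∀ i, Opene (U i)) (m : ℕ) :
    ∃ n, m < n ∧ ∀ i, n ∈ STset T (U i) δ := by
  obtain ⟨V, hV, hVm⟩ := exists_opene_STset_subset_Ioi hTc hδ m
  let e := Fintype.equivFin ι
  let W : Fin (Fintype.card ι + 1) → Set X := Fin.snoc (U ∘ e.symm) V
  have hW : ∀ j, Opene (W j) :=
    Fin.lastCases (by simpa [W] using hV) fun j => by simpa [W] using hU _
  obtain ⟨n, hn⟩ := hms _ W hW
  rw [mem_iInter] at hn
  exact ⟨n, hVm (by simpa [W] using hn (Fin.last _)),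
    fun i => by simpa [W] using hn (e i).castSucc⟩

end Dynamics

section Splitting

variable {X : Type*} [MetricSpace X] {T : X → X} {δ : ℝ}

/-- Cells are indexed by binary words of length `k + 1`; two cells whose words differ only in the
last letter are `δ`-apart at `time`, the moment at which that letter was chosen. -/
structure SplittingStage (T : X → X) (δ : ℝ) (k : ℕ) where
  time : ℕ
  cell : (Fin (k + 1) → Bool) → Set X
  opene_cell : ∀ s, Opene (cell s)
  separatedUnder_cell : ∀ s : Fin k → Bool,
    SeparatedUnder (T^[time]) δ (cell (Fin.snoc s false)) (cell (Fin.snoc s true))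

namespace SplittingStage

def ofSplit {k : ℕ} (n : ℕ) {A B : (Fin k → Bool) → Set X} (hA : ∀ s, Opene (A s))
    (hB : ∀ s, Opene (B s)) (hAB : ∀ s, SeparatedUnder (T^[n]) δ (A s) (B s)) :
    SplittingStage T δ k where
  time := n
  cell t := bif t (Fin.last k) then B (Fin.init t) else A (Fin.init t)
  opene_cell t := by cases t (Fin.last k) <;> simp [hA, hB]
  separatedUnder_cell s := by simpa using hAB s

theorem separatedUnder_of_init_eq {k : ℕ} (S : SplittingStage T δ k) {s t : Fin (k + 1) → Bool}
    (hinit : Fin.init s = Fin.init t) (hst : s ≠ t) :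
    SeparatedUnder (T^[S.time]) δ (S.cell s) (S.cell t) := by
  rw [← Fin.snoc_init_self s, ← Fin.snoc_init_self t, hinit] at hst ⊢
  cases hs : s (Fin.last k) <;> cases ht : t (Fin.last k) <;> simp only [hs, ht] at hst ⊢
  · exact absurd rfl hst
  · exact S.separatedUnder_cell _
  · exact (S.separatedUnder_cell _).symm
  · exact absurd rfl hst

theorem exists_time_eq_zero [Nonempty X] (hms : MultiSensitiveWith T δ) :
    ∃ S : SplittingStage T δ 0, S.time = 0 := by
  obtain ⟨n, hn⟩ := hms 0 (fun _ => univ) fun _ => ⟨isOpen_univ, univ_nonempty⟩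
  obtain ⟨x, -, y, -, hxy⟩ := mem_iInter.1 hn 0
  obtain ⟨A, B, hA, hB, -, -, hAB⟩ :=
    exists_opene_subset_separatedUnder (f := T^[0]) continuous_id isOpen_univ
      (mem_univ (T^[n] x)) (mem_univ (T^[n] y)) hxy
  exact ⟨ofSplit 0 (fun _ => hA) (fun _ => hB) fun _ => hAB, rfl⟩

theorem exists_next [Nonempty X] (hTc : Continuous T) (hδ : 0 < δ)
    (hms : MultiSensitiveWith T δ) {k : ℕ} (S : SplittingStage T δ k) :
    ∃ S' : SplittingStage T δ (k + 1),
      S.time < S'.time ∧ ∀ t, S'.cell t ⊆ S.cell (Fin.init t) := by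
  obtain ⟨n, hn, hsens⟩ := hms.exists_gt_forall_mem_STset hTc hδ S.opene_cell S.time
  have hsplit : ∀ s, ∃ A B : Set X, Opene A ∧ Opene B ∧ A ⊆ S.cell s ∧ B ⊆ S.cell s ∧
      SeparatedUnder (T^[n]) δ A B := fun s => by
    obtain ⟨x, hx, y, hy, hxy⟩ := hsens s
    exact exists_opene_subset_separatedUnder (hTc.iterate n) (S.opene_cell s).1 hx hy hxy
  choose A B hA hB hAS hBS hAB using hsplit
  refine ⟨ofSplit n hA hB hAB, hn, fun t => ?_⟩
  show (bif t (Fin.last (k + 1)) then B (Fin.init t) else A (Fin.init t)) ⊆ _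
  cases t (Fin.last (k + 1))
  exacts [hAS _, hBS _]

end SplittingStage

noncomputable def splittingChain [Nonempty X] (hTc : Continuous T) (hδ : 0 < δ)
    (hms : MultiSensitiveWith T δ) : (k : ℕ) → SplittingStage T δ k
  | 0 => (SplittingStage.exists_time_eq_zero hms).choose
  | k + 1 => ((splittingChain hTc hδ hms k).exists_next hTc hδ hms).choose

section

variable [Nonempty X] (hTc : Continuous T) (hδ : 0 < δ) (hms : MultiSensitiveWith T δ)

theorem splittingChain_zero_time : (splittingChain hTc hδ hms 0).time = 0 :=
  (SplittingStage.exists_time_eq_zero hms).choose_spec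

theorem splittingChain_time_lt_succ (k : ℕ) :
    (splittingChain hTc hδ hms k).time < (splittingChain hTc hδ hms (k + 1)).time :=
  ((splittingChain hTc hδ hms k).exists_next hTc hδ hms).choose_spec.1

theorem splittingChain_cell_succ_subset (k : ℕ) (t : Fin (k + 2) → Bool) :
    (splittingChain hTc hδ hms (k + 1)).cell t ⊆ (splittingChain hTc hδ hms k).cell (Fin.init t) :=
  ((splittingChain hTc hδ hms k).exists_next hTc hδ hms).choose_spec.2 t

theorem splittingChain_pairwise_separatedUnder (k : ℕ) :
    Pairwise fun s t : Fin (k + 1) → Bool => ∃ j < k + 1,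
      SeparatedUnder (T^[(splittingChain hTc hδ hms j).time]) δ
        ((splittingChain hTc hδ hms k).cell s) ((splittingChain hTc hδ hms k).cell t) := by
  induction k with
  | zero =>
    exact fun s t hst =>
      ⟨0, Nat.zero_lt_one, SplittingStage.separatedUnder_of_init_eq _ (Subsingleton.elim _ _) hst⟩
  | succ k ih =>
    intro s t hst
    by_cases hinit : Fin.init s = Fin.init t
    · exact ⟨k + 1, Nat.lt_succ_self _, SplittingStage.separatedUnder_of_init_eq _ hinit hst⟩
    · obtain ⟨j, hj, hsep⟩ := ih hinit
      exact ⟨j, Nat.lt_succ_of_lt hj, hsep.mono (splittingChain_cell_succ_subset hTc hδ hms k s)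
        (splittingChain_cell_succ_subset hTc hδ hms k t)⟩

end

end Splitting

theorem stmt16_general {X : Type*} [MetricSpace X] [CompactSpace X] [Nontrivial X]
    {T : X → X} (hTc : Continuous T)
    (hms : MultiSensitive T) :
    ∃ ns : ℕ → ℕ, ns 0 = 0 ∧ StrictMono ns ∧
      (Real.log 2 : EReal) ≤ seqEntropy T ns ∧ (0 : EReal) < seqEntropy T ns := by
  obtain ⟨δ, hδ, hms⟩ := hms
  set ns := fun k => (splittingChain hTc hδ hms k).time
  have hsep (k : ℕ) : 2 ^ (k + 1) ≤ sepNum T ns (k + 1) δ := by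
    simpa using card_le_sepNum hTc hδ (fun s => ((splittingChain hTc hδ hms k).opene_cell s).2)
      (splittingChain_pairwise_separatedUnder hTc hδ hms k)
  have hent : (Real.log 2 : EReal) ≤ seqEntropy T ns := by
    refine log_le_seqEntropy hδ two_pos (eventually_atTop.2 ⟨1, fun k hk => ?_⟩)
    obtain ⟨k, rfl⟩ := Nat.exists_eq_add_of_le' hk
    exact_mod_cast hsep k
  refine ⟨ns, splittingChain_zero_time hTc hδ hms,
    strictMono_nat_of_lt_succ (splittingChain_time_lt_succ hTc hδ hms), hent, ?_⟩
  exact lt_of_lt_of_le (by exact_mod_cast Real.log_pos one_lt_two) hent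

/-- Every multi-sensitive system has positive topological sequence entropy;
in fact there is a strictly increasing sequence `ns` (with `ns 0 = 0` by convention) along
which the topological sequence entropy is at least `log 2`. -/
theorem stmt16 {X : Type*} [MetricSpace X] [CompactSpace X] [Nontrivial X]
    (hperf : ∀ x : X, (𝓝[≠] x).NeBot)
    {T : X → X} (hTc : Continuous T) (hTs : Function.Surjective T)
    (hms : MultiSensitive T) :
    ∃ ns : ℕ → ℕ, ns 0 = 0 ∧ StrictMono ns ∧
      (Real.log 2 : EReal) ≤ seqEntropy T ns ∧ (0 : EReal) < seqEntropy T ns :=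
  stmt16_general hTc hms
end
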